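/- arXiv:2412.00422 — 8 statements merged into one kernel-verified Lean document; each statement's English description precedes it below -/
import Mathlib

section
/- Let g_1, …, g_K be vectors in a real inner product space with ‖g_k‖ ≤ G for all k, let D_1, …, D_K > 0 with D = Σ_{k=1}^K D_k, and let S ⊆ {1, …, K} be nonempty. Then ‖Σ_{k=1}^K (D_k/D)·g_k − (Σ_{k∈S} D_k·g_k)/(Σ_{k∈S} D_k)‖ ≤ (2G/D)·Σ_{k∉S} D_k. -/
/-!
Both averages are centres of mass, of all devices and of the scheduled ones. Writing
`D = Σ Dₖ`, `D_S = Σ_{k ∈ S} Dₖ` and `ḡ_S` for the partial average, the identities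
`D • ḡ = Σₖ Dₖ • gₖ` and `D_S • ḡ_S = Σ_{k ∈ S} Dₖ • gₖ` give
`ḡ - ḡ_S = D⁻¹ • (Σ_{k ∉ S} Dₖ • gₖ - (Σ_{k ∉ S} Dₖ) • ḡ_S)`,
and each of the two terms in the bracket has norm at most `G · Σ_{k ∉ S} Dₖ`, the second
because `ḡ_S` lies in the convex ball of radius `G`.
-/

open Finset

theorem Finset.centerMass_univ_sub_centerMass {R E ι : Type*} [Field R] [AddCommGroup E]
    [Module R E] [Fintype ι] [DecidableEq ι] (S : Finset ι) (w : ι → R) (z : ι → E)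
    (hA : ∑ i, w i ≠ 0) (hB : ∑ i ∈ S, w i ≠ 0) :
    univ.centerMass w z - S.centerMass w z =
      (∑ i, w i)⁻¹ • (∑ i ∈ Sᶜ, w i • z i - (∑ i ∈ Sᶜ, w i) • S.centerMass w z) := by
  have hS : (∑ i ∈ S, w i) • S.centerMass w z = ∑ i ∈ S, w i • z i :=
    smul_inv_smul₀ hB _
  rw [eq_inv_smul_iff₀ hA, smul_sub, centerMass, smul_inv_smul₀ hA,
    ← sum_add_sum_compl S w, add_smul, hS, ← sum_add_sum_compl S (fun i ↦ w i • z i)]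
  abel

section Norm

variable {E ι : Type*} [SeminormedAddCommGroup E] [NormedSpace ℝ E]

theorem norm_sum_smul_le_sum_mul (s : Finset ι) {w : ι → ℝ} {z : ι → E} {G : ℝ}
    (hw : ∀ i ∈ s, 0 ≤ w i) (hz : ∀ i ∈ s, ‖z i‖ ≤ G) :
    ‖∑ i ∈ s, w i • z i‖ ≤ (∑ i ∈ s, w i) * G := by
  rw [sum_mul]
  refine (norm_sum_le _ _).trans (sum_le_sum fun i hi ↦ ?_)
  rw [norm_smul, Real.norm_of_nonneg (hw i hi)]
  exact mul_le_mul_of_nonneg_left (hz i hi) (hw i hi)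

theorem norm_centerMass_le (s : Finset ι) {w : ι → ℝ} {z : ι → E} {G : ℝ}
    (hw : ∀ i ∈ s, 0 ≤ w i) (hpos : 0 < ∑ i ∈ s, w i) (hz : ∀ i ∈ s, ‖z i‖ ≤ G) :
    ‖s.centerMass w z‖ ≤ G := by
  simpa using (convex_closedBall (0 : E) G).centerMass_mem hw hpos (by simpa using hz)

theorem norm_centerMass_univ_sub_centerMass_le [Fintype ι] [DecidableEq ι] (S : Finset ι)
    {w : ι → ℝ} {z : ι → E} {G : ℝ} (hw : ∀ i, 0 ≤ w i) (hB : 0 < ∑ i ∈ S, w i)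
    (hz : ∀ i, ‖z i‖ ≤ G) :
    ‖univ.centerMass w z - S.centerMass w z‖ ≤ 2 * G / (∑ i, w i) * ∑ i ∈ Sᶜ, w i := by
  have hA : 0 < ∑ i, w i := hB.trans_le (sum_le_univ_sum_of_nonneg hw)
  have hout : ‖∑ i ∈ Sᶜ, w i • z i‖ ≤ (∑ i ∈ Sᶜ, w i) * G :=
    norm_sum_smul_le_sum_mul _ (fun i _ ↦ hw i) (fun i _ ↦ hz i)
  have hin : ‖(∑ i ∈ Sᶜ, w i) • S.centerMass w z‖ ≤ (∑ i ∈ Sᶜ, w i) * G := by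
    rw [norm_smul, Real.norm_of_nonneg (sum_nonneg fun i _ ↦ hw i)]
    exact mul_le_mul_of_nonneg_left (norm_centerMass_le S (fun i _ ↦ hw i) hB (fun i _ ↦ hz i))
      (sum_nonneg fun i _ ↦ hw i)
  rw [S.centerMass_univ_sub_centerMass w z hA.ne' hB.ne', norm_smul,
    Real.norm_of_nonneg (inv_nonneg.2 hA.le)]
  calc (∑ i, w i)⁻¹ * ‖∑ i ∈ Sᶜ, w i • z i - (∑ i ∈ Sᶜ, w i) • S.centerMass w z‖
      ≤ (∑ i, w i)⁻¹ * ((∑ i ∈ Sᶜ, w i) * G + (∑ i ∈ Sᶜ, w i) * G) :=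
        mul_le_mul_of_nonneg_left ((norm_sub_le _ _).trans (add_le_add hout hin))
          (inv_nonneg.2 hA.le)
    _ = 2 * G / (∑ i, w i) * ∑ i ∈ Sᶜ, w i := by ring

end Norm

/-- The gradient error incurred by aggregating only the devices in a nonempty set `S`:
the gap between the full `Dₖ`-weighted average and the partial weighted average is bounded
by `(2G/D) · Σ_{k ∉ S} Dₖ`, where `G` bounds the norms of the vectors. -/
theorem scheduling_gradient_error_bound
    {E : Type*} [NormedAddCommGroup E] [InnerProductSpace ℝ E] (K : ℕ)
    (g : Fin K → E) (G : ℝ) (hg : ∀ k, ‖g k‖ ≤ G)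
    (D : Fin K → ℝ) (hD : ∀ k, 0 < D k)
    (S : Finset (Fin K)) (hS : S.Nonempty) :
    ‖(∑ k, (D k / (∑ j, D j)) • g k)
        - (∑ j ∈ S, D j)⁻¹ • (∑ k ∈ S, D k • g k)‖
      ≤ (2 * G / (∑ j, D j)) * ∑ k ∈ Sᶜ, D k := by
  have hfull : ∑ k, (D k / ∑ j, D j) • g k = univ.centerMass D g := by
    simp only [centerMass, div_eq_inv_mul, mul_smul, ← smul_sum]
  rw [hfull]
  exact norm_centerMass_univ_sub_centerMass_le S (fun k ↦ (hD k).le)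
    (sum_pos (fun k _ ↦ hD k) hS) hg
end

section
/- Let F : ℝ^d → ℝ be differentiable with L-Lipschitz gradient (L > 0), let F* ∈ ℝ satisfy F* ≤ F(u) for all u, and suppose F satisfies the Polyak–Łojasiewicz inequality with constant δ > 0: ‖∇F(u)‖² ≥ 2δ(F(u) − F*) for all u. For any w, e ∈ ℝ^d, setting w⁺ = w − (1/L)(∇F(w) − e), it holds that F(w⁺) − F* ≤ (1 − δ/L)(F(w) − F*) + (1/(2L))·‖e‖². -/
/-!
The descent lemma `F (x + v) ≤ F x + ⟪∇F x, v⟫ + (L/2)‖v‖²` for an `L`-Lipschitz gradient turns the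
inexact step `v = -(1/L)(∇F w - e)` into the decrease `F w⁺ ≤ F w - ‖∇F w‖²/(2L) + ‖e‖²/(2L)`;
the PL inequality bounds `‖∇F w‖²/(2L)` from below by `(δ/L)(F w - F*)`.
-/

open scoped RealInnerProductSpace

section

variable {E : Type*} [NormedAddCommGroup E] [InnerProductSpace ℝ E] [CompleteSpace E]
  {F : E → ℝ} {L : ℝ}

theorem apply_add_le_of_gradient_lipschitz (hdiff : Differentiable ℝ F)
    (hlip : ∀ u v, ‖gradient F u - gradient F v‖ ≤ L * ‖u - v‖) (x v : E) :
    F (x + v) ≤ F x + ⟪gradient F x, v⟫ + L / 2 * ‖v‖ ^ 2 := by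
  -- `φ 1 ≤ φ 0` is the claim; Cauchy–Schwarz and the Lipschitz bound give `φ' ≤ 0` on `t ≥ 0`.
  set φ : ℝ → ℝ := fun t ↦ F (x + t • v) - t * ⟪gradient F x, v⟫ - L / 2 * t ^ 2 * ‖v‖ ^ 2
  have hφ' : ∀ t,
      HasDerivAt φ (⟪gradient F (x + t • v) - gradient F x, v⟫ - L * t * ‖v‖ ^ 2) t := by
    intro t
    have hline : HasDerivAt (fun t : ℝ ↦ x + t • v) v t := by
      simpa using ((hasDerivAt_id t).smul_const v).const_add x
    have hF := ((hdiff _).hasGradientAt.hasFDerivAt).comp_hasDerivAt t hline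
    refine ((hF.sub ((hasDerivAt_id t).mul_const ⟪gradient F x, v⟫)).sub
      (((hasDerivAt_pow 2 t).const_mul (L / 2)).mul_const (‖v‖ ^ 2))).congr_deriv ?_
    simp only [InnerProductSpace.toDual_apply_apply, inner_sub_left]
    ring
  have hφ'_nonpos : ∀ t, 0 ≤ t →
      ⟪gradient F (x + t • v) - gradient F x, v⟫ - L * t * ‖v‖ ^ 2 ≤ 0 := by
    intro t ht
    calc ⟪gradient F (x + t • v) - gradient F x, v⟫ - L * t * ‖v‖ ^ 2
        ≤ L * ‖x + t • v - x‖ * ‖v‖ - L * t * ‖v‖ ^ 2 := by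
          gcongr
          exact (real_inner_le_norm _ _).trans (by gcongr; exact hlip _ _)
      _ = 0 := by
          rw [add_sub_cancel_left, norm_smul, Real.norm_of_nonneg ht]
          ring
  have hφ_anti : AntitoneOn φ (Set.Ici 0) :=
    antitoneOn_of_hasDerivWithinAt_nonpos (convex_Ici 0)
      (fun t _ ↦ (hφ' t).continuousAt.continuousWithinAt)
      (fun t _ ↦ (hφ' t).hasDerivWithinAt)
      (fun t ht ↦ hφ'_nonpos t (interior_subset ht))
  have hφ_one_le := hφ_anti Set.self_mem_Ici (Set.mem_Ici.2 zero_le_one) zero_le_one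
  simp only [φ, one_smul, zero_smul, add_zero] at hφ_one_le
  linarith

theorem apply_inexact_gradient_step_le (hL : L ≠ 0) (hdiff : Differentiable ℝ F)
    (hlip : ∀ u v, ‖gradient F u - gradient F v‖ ≤ L * ‖u - v‖) (w e : E) :
    F (w - (1 / L) • (gradient F w - e))
      ≤ F w - ‖gradient F w‖ ^ 2 / (2 * L) + ‖e‖ ^ 2 / (2 * L) := by
  have hstep := apply_add_le_of_gradient_lipschitz hdiff hlip w (-((1 / L) • (gradient F w - e)))
  rw [← sub_eq_add_neg] at hstep
  set g := gradient F w
  have hquad : ⟪g, -((1 / L) • (g - e))⟫ + L / 2 * ‖-((1 / L) • (g - e))‖ ^ 2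
      = -(‖g‖ ^ 2 / (2 * L)) + ‖e‖ ^ 2 / (2 * L) := by
    rw [inner_neg_right, real_inner_smul_right, inner_sub_right, real_inner_self_eq_norm_sq,
      norm_neg, norm_smul, mul_pow, norm_sub_sq_real, Real.norm_eq_abs, sq_abs]
    field_simp
    ring
  linarith

end

theorem pl_one_step_contraction_general
    (d : ℕ) (F : EuclideanSpace ℝ (Fin d) → ℝ) (L δ Fstar : ℝ)
    (hL : 0 < L)
    (hdiff : Differentiable ℝ F)
    (hlip : ∀ u v : EuclideanSpace ℝ (Fin d),
      ‖gradient F u - gradient F v‖ ≤ L * ‖u - v‖)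
    (hPL : ∀ u, 2 * δ * (F u - Fstar) ≤ ‖gradient F u‖ ^ 2)
    (w e : EuclideanSpace ℝ (Fin d)) :
    F (w - (1 / L) • (gradient F w - e)) - Fstar
      ≤ (1 - δ / L) * (F w - Fstar) + (1 / (2 * L)) * ‖e‖ ^ 2 := by
  have hstep := apply_inexact_gradient_step_le hL.ne' hdiff hlip w e
  have hPL_scaled : δ / L * (F w - Fstar) ≤ ‖gradient F w‖ ^ 2 / (2 * L) := by
    calc δ / L * (F w - Fstar) = 2 * δ * (F w - Fstar) / (2 * L) := by field_simp
      _ ≤ ‖gradient F w‖ ^ 2 / (2 * L) := by gcongr; exact hPL w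
  have hrhs : (1 - δ / L) * (F w - Fstar) + (1 / (2 * L)) * ‖e‖ ^ 2
      = F w - Fstar - δ / L * (F w - Fstar) + ‖e‖ ^ 2 / (2 * L) := by ring
  linarith

/-- One-step contraction of the optimality gap under the PL inequality with an inexact
gradient step `w⁺ = w - (1/L)(∇F w - e)`:
`F w⁺ - F* ≤ (1 - δ/L)(F w - F*) + (1/(2L))‖e‖²`. -/
theorem pl_one_step_contraction
    (d : ℕ) (F : EuclideanSpace ℝ (Fin d) → ℝ) (L δ Fstar : ℝ)
    (hL : 0 < L) (hδ : 0 < δ)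
    (hdiff : Differentiable ℝ F)
    (hlip : ∀ u v : EuclideanSpace ℝ (Fin d),
      ‖gradient F u - gradient F v‖ ≤ L * ‖u - v‖)
    (hlow : ∀ u, Fstar ≤ F u)
    (hPL : ∀ u, 2 * δ * (F u - Fstar) ≤ ‖gradient F u‖ ^ 2)
    (w e : EuclideanSpace ℝ (Fin d)) :
    F (w - (1 / L) • (gradient F w - e)) - Fstar
      ≤ (1 - δ / L) * (F w - Fstar) + (1 / (2 * L)) * ‖e‖ ^ 2 :=
  pl_one_step_contraction_general d F L δ Fstar hL hdiff hlip hPL w e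
end

section
/- Consider K devices, where device k holds D_k differentiable sample losses f_{k,i} : ℝ^d → ℝ (i = 1,…,D_k); let F_k = (1/D_k)Σ_i f_{k,i} be the local loss, D = Σ_k D_k, and F = (1/D)Σ_k Σ_i f_{k,i} the global loss. Assume: F is differentiable with L-Lipschitz gradient (L > 0); F satisfies the Polyak–Łojasiewicz inequality ‖∇F(u)‖² ≥ 2δ(F(u) − F*) with 0 < δ ≤ L, where F* ∈ ℝ satisfies F* ≤ F(u) for all u; and ‖∇f_{k,i}(u)‖² ≤ ε for all u, k, i. For t = 1,…,T let S_t ⊆ {1,…,K} be a nonempty set of scheduled devices and update w_t = w_{t−1} − (1/L)·(Σ_{k∈S_t} D_k ∇F_k(w_{t−1}))/(Σ_{k∈S_t} D_k). Then F(w_T) − F* ≤ (1 − δ/L)^T (F(w_0) − F*) + Σ_{t=1}^T A_t (1 − δ/L)^{T−t}, where A_t = (2ε/(L D²))·(Σ_{k∉S_t} D_k)². -/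
/-!
One round is an inexact gradient step `w_t = w_{t-1} - g_t / L`. The descent lemma for the
`L`-smooth `F` gives `F(w_t) ≤ F(w_{t-1}) - ‖∇F‖² / (2L) + ‖g_t - ∇F‖² / (2L)`, and the PL
inequality turns the middle term into the contraction factor `1 - δ/L`. The scheduling error
`g_t - ∇F` is the difference between the partial (over `S_t`) and the full `D_k`-weighted
averages of the local gradients, all of norm `≤ √ε`, so it has norm at most
`2 √ε (Σ_{k ∉ S_t} D_k) / D`. Unrolling the resulting linear recursion gives the bound.
-/

open Finset InnerProductSpace

theorem norm_inv_card_smul_sum_le {ι E : Type*} [SeminormedAddCommGroup E] [NormedSpace ℝ E]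
    {s : Finset ι} (hs : s.Nonempty) {v : ι → E} {B : ℝ} (hv : ∀ i ∈ s, ‖v i‖ ≤ B) :
    ‖(#s : ℝ)⁻¹ • ∑ i ∈ s, v i‖ ≤ B := by
  have hcard : (0 : ℝ) < #s := by exact_mod_cast hs.card_pos
  calc ‖(#s : ℝ)⁻¹ • ∑ i ∈ s, v i‖ ≤ (#s : ℝ)⁻¹ * (#s * B) := by
        rw [norm_smul, norm_inv, RCLike.norm_natCast]
        gcongr
        simpa using norm_sum_le_of_le s hv
    _ = B := by field_simp

theorem norm_partial_weighted_average_sub_le {ι E : Type*} [Fintype ι] [DecidableEq ι]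
    [SeminormedAddCommGroup E] [NormedSpace ℝ E] {w : ι → ℝ} (hw : ∀ i, 0 ≤ w i)
    {v : ι → E} {B : ℝ} (hv : ∀ i, ‖v i‖ ≤ B) {s : Finset ι} (hs : 0 < ∑ i ∈ s, w i) :
    ‖(∑ i ∈ s, w i)⁻¹ • ∑ i ∈ s, w i • v i - (∑ i, w i)⁻¹ • ∑ i, w i • v i‖
      ≤ 2 * B * (∑ i ∈ sᶜ, w i) / ∑ i, w i := by
  have hsum : ∀ t : Finset ι, ‖∑ i ∈ t, w i • v i‖ ≤ (∑ i ∈ t, w i) * B := fun t ↦ by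
    rw [sum_mul]
    refine norm_sum_le_of_le t fun i _ ↦ ?_
    rw [norm_smul, Real.norm_of_nonneg (hw i)]
    exact mul_le_mul_of_nonneg_left (hv i) (hw i)
  rw [← sum_add_sum_compl s w, ← sum_add_sum_compl s fun i ↦ w i • v i]
  set WS := ∑ i ∈ s, w i
  set WC := ∑ i ∈ sᶜ, w i
  have hWC : 0 ≤ WC := sum_nonneg fun i _ ↦ hw i
  have hinv : (WS + WC)⁻¹ ≤ WS⁻¹ := inv_anti₀ hs (by linarith)
  calc _ = ‖(WS⁻¹ - (WS + WC)⁻¹) • ∑ i ∈ s, w i • v i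
          - (WS + WC)⁻¹ • ∑ i ∈ sᶜ, w i • v i‖ := by congr 1; module
    _ ≤ (WS⁻¹ - (WS + WC)⁻¹) * (WS * B) + (WS + WC)⁻¹ * (WC * B) := by
        have hW : 0 ≤ (WS + WC)⁻¹ := inv_nonneg.mpr (by linarith)
        refine (norm_sub_le _ _).trans (add_le_add ?_ ?_)
        · rw [norm_smul, Real.norm_of_nonneg (sub_nonneg.mpr hinv)]
          exact mul_le_mul_of_nonneg_left (hsum s) (sub_nonneg.mpr hinv)
        · rw [norm_smul, Real.norm_of_nonneg hW]
          exact mul_le_mul_of_nonneg_left (hsum sᶜ) hW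
    _ = 2 * B * WC / (WS + WC) := by field_simp; ring

section Gradient

variable {E : Type*} [NormedAddCommGroup E] [InnerProductSpace ℝ E] [CompleteSpace E]

theorem HasGradientAt.fun_sum {ι : Type*} {s : Finset ι} {f : ι → E → ℝ} {f' : ι → E} {x : E}
    (h : ∀ i ∈ s, HasGradientAt (f i) (f' i) x) :
    HasGradientAt (fun y ↦ ∑ i ∈ s, f i y) (∑ i ∈ s, f' i) x := by
  rw [hasGradientAt_iff_hasFDerivAt, map_sum]
  exact HasFDerivAt.fun_sum fun i hi ↦ (h i hi).hasFDerivAt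

theorem HasGradientAt.const_mul {f : E → ℝ} {f' x : E} (c : ℝ) (h : HasGradientAt f f' x) :
    HasGradientAt (fun y ↦ c * f y) (c • f') x := by
  rw [hasGradientAt_iff_hasFDerivAt, map_smul]
  exact h.hasFDerivAt.const_mul c

theorem le_add_inner_gradient_add_sq_of_lipschitz_gradient {F : E → ℝ} {L : ℝ}
    (hF : Differentiable ℝ F) (hlip : ∀ u v, ‖gradient F u - gradient F v‖ ≤ L * ‖u - v‖)
    (x y : E) :
    F y ≤ F x + ⟪gradient F x, y - x⟫_ℝ + L / 2 * ‖y - x‖ ^ 2 := by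
  set v := y - x
  let φ : ℝ → ℝ := fun s ↦ F (x + s • v) - s * ⟪gradient F x, v⟫_ℝ - s ^ 2 * (L / 2 * ‖v‖ ^ 2)
  have hφ : ∀ s, HasDerivAt φ
      (⟪gradient F (x + s • v) - gradient F x, v⟫_ℝ - s * (L * ‖v‖ ^ 2)) s := by
    intro s
    have hline : HasDerivAt (fun s : ℝ ↦ x + s • v) v s := by
      simpa using ((hasDerivAt_id s).smul_const v).const_add x
    have hFline := (hF (x + s • v)).hasGradientAt.hasFDerivAt.comp_hasDerivAt s hline
    refine ((hFline.sub ((hasDerivAt_id s).mul_const ⟪gradient F x, v⟫_ℝ)).sub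
      ((hasDerivAt_pow 2 s).mul_const (L / 2 * ‖v‖ ^ 2))).congr_deriv ?_
    simp only [toDual_apply_apply, inner_sub_left]
    ring
  have hφ'_nonpos : ∀ s ∈ interior (Set.Icc (0 : ℝ) 1),
      ⟪gradient F (x + s • v) - gradient F x, v⟫_ℝ - s * (L * ‖v‖ ^ 2) ≤ 0 := by
    intro s hs
    rw [interior_Icc] at hs
    have : ⟪gradient F (x + s • v) - gradient F x, v⟫_ℝ ≤ L * ‖s • v‖ * ‖v‖ := by
      calc _ ≤ ‖gradient F (x + s • v) - gradient F x‖ * ‖v‖ := real_inner_le_norm _ _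
        _ ≤ L * ‖s • v‖ * ‖v‖ := by
          gcongr
          simpa using hlip (x + s • v) x
    rw [norm_smul, Real.norm_of_nonneg hs.1.le] at this
    linarith
  have hanti : AntitoneOn φ (Set.Icc 0 1) :=
    antitoneOn_of_hasDerivWithinAt_nonpos (convex_Icc 0 1)
      (fun s _ ↦ (hφ s).continuousAt.continuousWithinAt)
      (fun s _ ↦ (hφ s).hasDerivWithinAt) hφ'_nonpos
  have hφ0 : φ 0 = F x := by simp [φ]
  have hφ1 : φ 1 = F y - ⟪gradient F x, v⟫_ℝ - L / 2 * ‖v‖ ^ 2 := by simp [φ, v]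
  linarith [hanti (by simp) (by simp) zero_le_one]

theorem sub_le_of_inexact_gradient_step {F : E → ℝ} {L δ Fstar : ℝ}
    (hF : Differentiable ℝ F) (hlip : ∀ u v, ‖gradient F u - gradient F v‖ ≤ L * ‖u - v‖)
    (hL : 0 < L) {x : E} (hPL : 2 * δ * (F x - Fstar) ≤ ‖gradient F x‖ ^ 2) (g : E) :
    F (x - (1 / L) • g) - Fstar
      ≤ (1 - δ / L) * (F x - Fstar) + ‖g - gradient F x‖ ^ 2 / (2 * L) := by
  have hdescent : F (x - (1 / L) • g)
      ≤ F x + ‖g - gradient F x‖ ^ 2 / (2 * L) - ‖gradient F x‖ ^ 2 / (2 * L) := by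
    have h := le_add_inner_gradient_add_sq_of_lipschitz_gradient hF hlip x (x - (1 / L) • g)
    rw [sub_sub_cancel_left, inner_neg_right, real_inner_smul_right, norm_neg, norm_smul,
      Real.norm_of_nonneg (by positivity)] at h
    rw [norm_sub_sq_real, real_inner_comm]
    convert h using 1
    field_simp
    ring
  have hPL' : δ / L * (F x - Fstar) ≤ ‖gradient F x‖ ^ 2 / (2 * L) := by
    rw [div_mul_eq_mul_div, div_le_div_iff₀ hL (by positivity)]
    nlinarith
  linarith

theorem sub_le_of_partial_average_gradient_step {ι : Type*} [Fintype ι] [DecidableEq ι]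
    {F : E → ℝ} {L δ Fstar B : ℝ}
    (hF : Differentiable ℝ F) (hlip : ∀ u v, ‖gradient F u - gradient F v‖ ≤ L * ‖u - v‖)
    (hL : 0 < L) {x : E} (hPL : 2 * δ * (F x - Fstar) ≤ ‖gradient F x‖ ^ 2)
    {W : ι → ℝ} (hW : ∀ i, 0 ≤ W i) {G : ι → E} (hG : ∀ i, ‖G i‖ ≤ B)
    (hgrad : gradient F x = (∑ i, W i)⁻¹ • ∑ i, W i • G i)
    {s : Finset ι} (hs : 0 < ∑ i ∈ s, W i) :
    F (x - (1 / L) • ((∑ i ∈ s, W i)⁻¹ • ∑ i ∈ s, W i • G i)) - Fstar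
      ≤ (1 - δ / L) * (F x - Fstar)
        + 2 * B ^ 2 / (L * (∑ i, W i) ^ 2) * (∑ i ∈ sᶜ, W i) ^ 2 := by
  refine (sub_le_of_inexact_gradient_step hF hlip hL hPL _).trans (add_le_add_right ?_ _)
  have herr := norm_partial_weighted_average_sub_le hW hG hs
  rw [← hgrad] at herr
  calc _ ≤ (2 * B * (∑ i ∈ sᶜ, W i) / ∑ i, W i) ^ 2 / (2 * L) := by gcongr
    _ = _ := by field_simp

end Gradient

theorem le_pow_mul_add_sum_of_le_mul_add {R : Type*} [CommSemiring R] [PartialOrder R]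
    [IsOrderedRing R] {e c : ℕ → R} {r : R} (hr : 0 ≤ r) {T : ℕ}
    (h : ∀ t, 1 ≤ t → t ≤ T → e t ≤ r * e (t - 1) + c t) :
    e T ≤ r ^ T * e 0 + ∑ t ∈ Icc 1 T, c t * r ^ (T - t) := by
  induction T with
  | zero => simp
  | succ n ih =>
    have hshift :
        ∑ t ∈ Icc 1 n, c t * r ^ (n + 1 - t) = r * ∑ t ∈ Icc 1 n, c t * r ^ (n - t) := by
      rw [mul_sum]
      refine sum_congr rfl fun t ht ↦ ?_
      rw [show n + 1 - t = n - t + 1 by grind, pow_succ]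
      ring
    calc e (n + 1) ≤ r * e n + c (n + 1) := h (n + 1) (by omega) le_rfl
      _ ≤ r * (r ^ n * e 0 + ∑ t ∈ Icc 1 n, c t * r ^ (n - t)) + c (n + 1) := by
          gcongr
          exact ih fun t h1 h2 ↦ h t h1 (by omega)
      _ = _ := by rw [sum_Icc_succ_top (by omega), hshift, Nat.sub_self]; ring

theorem fl_optimality_gap_bound_general
    (d K : ℕ) (Dk : Fin K → ℕ) (hDk : ∀ k, 0 < Dk k)
    (f : (k : Fin K) → Fin (Dk k) → EuclideanSpace ℝ (Fin d) → ℝ)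
    (hfdiff : ∀ k i, Differentiable ℝ (f k i))
    (Floc : Fin K → EuclideanSpace ℝ (Fin d) → ℝ)
    (hFloc : ∀ k u, Floc k u = ((Dk k : ℝ))⁻¹ * ∑ i, f k i u)
    (Fglob : EuclideanSpace ℝ (Fin d) → ℝ)
    (hFglob : ∀ u, Fglob u = (∑ k, (Dk k : ℝ))⁻¹ * ∑ k, ∑ i, f k i u)
    (L δ ε Fstar : ℝ) (hL : 0 < L) (hδL : δ ≤ L)
    (hFdiff : Differentiable ℝ Fglob)
    (hlip : ∀ u v : EuclideanSpace ℝ (Fin d),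
      ‖gradient Fglob u - gradient Fglob v‖ ≤ L * ‖u - v‖)
    (hPL : ∀ u, 2 * δ * (Fglob u - Fstar) ≤ ‖gradient Fglob u‖ ^ 2)
    (hgradbound : ∀ k i u, ‖gradient (f k i) u‖ ^ 2 ≤ ε)
    (T : ℕ) (S : ℕ → Finset (Fin K)) (hS : ∀ t, 1 ≤ t → t ≤ T → (S t).Nonempty)
    (w : ℕ → EuclideanSpace ℝ (Fin d))
    (hw : ∀ t, 1 ≤ t → t ≤ T →
      w t = w (t - 1) - (1 / L) •
        ((∑ k ∈ S t, (Dk k : ℝ))⁻¹ •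
          ∑ k ∈ S t, (Dk k : ℝ) • gradient (Floc k) (w (t - 1)))) :
    Fglob (w T) - Fstar
      ≤ (1 - δ / L) ^ T * (Fglob (w 0) - Fstar)
        + ∑ t ∈ Finset.Icc 1 T,
            ((2 * ε / (L * (∑ k, (Dk k : ℝ)) ^ 2)) * (∑ k ∈ (S t)ᶜ, (Dk k : ℝ)) ^ 2)
              * (1 - δ / L) ^ (T - t) := by
  have hgradFloc : ∀ k u, gradient (Floc k) u = (Dk k : ℝ)⁻¹ • ∑ i, gradient (f k i) u := by
    intro k u
    rw [show Floc k = _ from funext (hFloc k)]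
    exact ((HasGradientAt.fun_sum fun i _ ↦ (hfdiff k i u).hasGradientAt).const_mul _).gradient
  have hgradFglob : ∀ u, gradient Fglob u
      = (∑ k, (Dk k : ℝ))⁻¹ • ∑ k, (Dk k : ℝ) • gradient (Floc k) u := by
    intro u
    have hcancel : ∀ k, (Dk k : ℝ) • gradient (Floc k) u = ∑ i, gradient (f k i) u := fun k ↦ by
      rw [hgradFloc, smul_inv_smul₀ (by exact_mod_cast (hDk k).ne')]
    simp_rw [hcancel]
    rw [show Fglob = _ from funext hFglob]
    exact ((HasGradientAt.fun_sum fun k _ ↦ HasGradientAt.fun_sum fun i _ ↦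
      (hfdiff k i u).hasGradientAt).const_mul _).gradient
  have hgradFloc_le : ∀ k u, ‖gradient (Floc k) u‖ ≤ √ε := by
    intro k u
    rw [hgradFloc]
    simpa using norm_inv_card_smul_sum_le (s := univ) ⟨⟨0, hDk k⟩, mem_univ _⟩
      fun i _ ↦ Real.le_sqrt_of_sq_le (hgradbound k i u)
  refine le_pow_mul_add_sum_of_le_mul_add (e := fun t ↦ Fglob (w t) - Fstar)
    (c := fun t ↦ 2 * ε / (L * (∑ k, (Dk k : ℝ)) ^ 2) * (∑ k ∈ (S t)ᶜ, (Dk k : ℝ)) ^ 2)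
    (sub_nonneg.mpr ((div_le_one hL).mpr hδL)) fun t ht1 htT ↦ ?_
  obtain ⟨k₀, hk₀⟩ := hS t ht1 htT
  have hε : 0 ≤ ε := (sq_nonneg _).trans (hgradbound k₀ ⟨0, hDk k₀⟩ 0)
  have hDS : 0 < ∑ k ∈ S t, (Dk k : ℝ) :=
    sum_pos (fun k _ ↦ Nat.cast_pos.mpr (hDk k)) ⟨k₀, hk₀⟩
  rw [hw t ht1 htT, ← Real.sq_sqrt hε]
  exact sub_le_of_partial_average_gradient_step hFdiff hlip hL (hPL _)
    (fun k ↦ (Dk k).cast_nonneg) (hgradFloc_le · (w (t - 1))) (hgradFglob _) hDS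

/-- Theorem 1 of the paper: optimality-gap bound of federated learning with partial
device scheduling. After `T` rounds with scheduled sets `S t` and learning rate `1/L`,
`F(w_T) - F* ≤ (1 - δ/L)^T (F(w_0) - F*) + Σ_{t=1}^T A_t (1 - δ/L)^{T-t}`, where
`A_t = (2ε/(L D²)) (Σ_{k ∉ S_t} D_k)²`. -/
theorem fl_optimality_gap_bound
    (d K : ℕ) (Dk : Fin K → ℕ) (hDk : ∀ k, 0 < Dk k)
    (f : (k : Fin K) → Fin (Dk k) → EuclideanSpace ℝ (Fin d) → ℝ)
    (hfdiff : ∀ k i, Differentiable ℝ (f k i))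
    (Floc : Fin K → EuclideanSpace ℝ (Fin d) → ℝ)
    (hFloc : ∀ k u, Floc k u = ((Dk k : ℝ))⁻¹ * ∑ i, f k i u)
    (Fglob : EuclideanSpace ℝ (Fin d) → ℝ)
    (hFglob : ∀ u, Fglob u = (∑ k, (Dk k : ℝ))⁻¹ * ∑ k, ∑ i, f k i u)
    (L δ ε Fstar : ℝ) (hL : 0 < L) (hδ : 0 < δ) (hδL : δ ≤ L)
    (hFdiff : Differentiable ℝ Fglob)
    (hlip : ∀ u v : EuclideanSpace ℝ (Fin d),
      ‖gradient Fglob u - gradient Fglob v‖ ≤ L * ‖u - v‖)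
    (hlow : ∀ u, Fstar ≤ Fglob u)
    (hPL : ∀ u, 2 * δ * (Fglob u - Fstar) ≤ ‖gradient Fglob u‖ ^ 2)
    (hgradbound : ∀ k i u, ‖gradient (f k i) u‖ ^ 2 ≤ ε)
    (T : ℕ) (S : ℕ → Finset (Fin K)) (hS : ∀ t, 1 ≤ t → t ≤ T → (S t).Nonempty)
    (w : ℕ → EuclideanSpace ℝ (Fin d))
    (hw : ∀ t, 1 ≤ t → t ≤ T →
      w t = w (t - 1) - (1 / L) •
        ((∑ k ∈ S t, (Dk k : ℝ))⁻¹ •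
          ∑ k ∈ S t, (Dk k : ℝ) • gradient (Floc k) (w (t - 1)))) :
    Fglob (w T) - Fstar
      ≤ (1 - δ / L) ^ T * (Fglob (w 0) - Fstar)
        + ∑ t ∈ Finset.Icc 1 T,
            ((2 * ε / (L * (∑ k, (Dk k : ℝ)) ^ 2)) * (∑ k ∈ (S t)ᶜ, (Dk k : ℝ)) ^ 2)
              * (1 - δ / L) ^ (T - t) :=
  fl_optimality_gap_bound_general d K Dk hDk f hfdiff Floc hFloc Fglob hFglob L δ ε Fstar hL hδL
    hFdiff hlip hPL hgradbound T S hS w hw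
end

section
/- Let B, σ², E, γ, s > 0. The equation B·x·log₂(1 + E·γ/(B·σ²·x)) = s has a solution x > 0 if and only if E·γ > s·σ²·ln 2; moreover, when a solution exists it is unique. -/
/-!
With `c = Eγ/(Bσ²)` the equation reads `φ(x) = s·ln 2 / B` for `φ(x) = x·ln(1 + c/x)`.
On `[0, ∞)` the function `φ` is continuous with `φ(0) = 0` and strictly increasing, since
`φ'(x) = ln(1 + u) - u/(1 + u) > 0` for `u = c/x`; moreover `φ < c` and `φ(x) → c` as `x → ∞`.
Hence `φ` maps `(0, ∞)` bijectively onto `(0, c)`.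
-/

open Real Set Filter

/-- At `x = 0` this is `0` (as `c / 0 = 0`), which is also the continuous extension. -/
noncomputable def mulLogOneAddDiv (c x : ℝ) : ℝ := x * log (1 + c / x)

lemma div_one_add_lt_log_one_add {u : ℝ} (hu : 0 < u) : u / (1 + u) < log (1 + u) :=
  calc u / (1 + u) ≤ 2 * u / (u + 2) := by
        rw [div_le_div_iff₀ (by positivity) (by positivity)]; nlinarith
    _ < log (1 + u) := lt_log_one_add_of_pos hu

lemma mulLogOneAddDiv_lt {c x : ℝ} (hc : 0 < c) (hx : 0 < x) : mulLogOneAddDiv c x < c := by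
  have hu : 0 < c / x := div_pos hc hx
  have hlog : log (1 + c / x) < c / x := by
    linarith [log_lt_sub_one_of_pos (x := 1 + c / x) (by positivity) (ne_of_gt (by linarith))]
  calc x * log (1 + c / x) < x * (c / x) := by gcongr
    _ = c := by field_simp

lemma mulLogOneAddDiv_eq_sub {c x : ℝ} (hc : 0 ≤ c) (hx : 0 ≤ x) :
    mulLogOneAddDiv c x = x * log (x + c) - x * log x := by
  rcases hx.eq_or_lt with rfl | hx
  · simp [mulLogOneAddDiv]
  · rw [mulLogOneAddDiv, ← mul_sub, ← log_div (by positivity) hx.ne', add_div, div_self hx.ne']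

lemma continuousOn_mulLogOneAddDiv {c : ℝ} (hc : 0 < c) :
    ContinuousOn (mulLogOneAddDiv c) (Ici 0) := by
  have hsub : ContinuousOn (fun x ↦ x * log (x + c) - x * log x) (Ici 0) :=
    (continuousOn_id.mul ((continuousOn_id.add continuousOn_const).log
      fun x hx ↦ (add_pos_of_nonneg_of_pos hx hc).ne')).sub
      continuous_mul_log.continuousOn
  exact hsub.congr fun x hx ↦ mulLogOneAddDiv_eq_sub hc.le hx

lemma hasDerivAt_mulLogOneAddDiv {c x : ℝ} (hc : 0 ≤ c) (hx : 0 < x) :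
    HasDerivAt (mulLogOneAddDiv c) (log (1 + c / x) - c / (x + c)) x := by
  have h1 : HasDerivAt (fun y ↦ 1 + c / y) (c * -(x ^ 2)⁻¹) x := by
    simpa [div_eq_mul_inv] using ((hasDerivAt_inv hx.ne').const_mul c).const_add 1
  refine ((hasDerivAt_id' x).mul (h1.log (by positivity))).congr_deriv ?_
  field_simp
  ring

lemma strictMonoOn_mulLogOneAddDiv {c : ℝ} (hc : 0 < c) :
    StrictMonoOn (mulLogOneAddDiv c) (Ici 0) := by
  refine strictMonoOn_of_deriv_pos (convex_Ici 0) (continuousOn_mulLogOneAddDiv hc) fun x hx ↦ ?_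
  rw [interior_Ici] at hx
  have hx : 0 < x := hx
  rw [(hasDerivAt_mulLogOneAddDiv hc.le hx).deriv, sub_pos]
  convert div_one_add_lt_log_one_add (div_pos hc hx) using 1
  field_simp

lemma exists_mulLogOneAddDiv_eq_iff {c t : ℝ} (hc : 0 < c) (ht : 0 < t) :
    (∃ x > 0, mulLogOneAddDiv c x = t) ↔ t < c := by
  refine ⟨fun ⟨x, hx, hxt⟩ ↦ hxt ▸ mulLogOneAddDiv_lt hc hx, fun htc ↦ ?_⟩
  obtain ⟨b, htb, hb⟩ := ((tendsto_mul_log_one_add_div_atTop c).eventually (eventually_gt_nhds htc)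
    |>.and (eventually_gt_atTop 0)).exists
  have hf0 : mulLogOneAddDiv c 0 = 0 := by simp [mulLogOneAddDiv]
  obtain ⟨x, hx, hxt⟩ := intermediate_value_Ioc hb.le
    ((continuousOn_mulLogOneAddDiv hc).mono Icc_subset_Ici_self) ⟨by rwa [hf0], htb.le⟩
  exact ⟨x, hx.1, hxt⟩

lemma mul_mul_log_div_log_eq_iff {B N K x s b : ℝ} (hB : B ≠ 0) (hb : 1 < b) :
    B * x * (log (1 + K / (N * x)) / log b) = s ↔ mulLogOneAddDiv (K / N) x = s * log b / B := by
  rw [mulLogOneAddDiv, div_div, eq_div_iff hB, ← mul_div_assoc, div_eq_iff (log_pos hb).ne']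
  constructor <;> intro h <;> linarith

/-- Solvability of the transmission-time equation `B·x·log₂(1 + Eγ/(Bσ²x)) = s`:
a positive solution exists iff `E·γ > s·σ²·ln 2`, and in that case it is unique. -/
theorem transmission_time_equation_solvable_iff
    (B σ2 E γ s : ℝ) (hB : 0 < B) (hσ : 0 < σ2) (hE : 0 < E) (hγ : 0 < γ) (hs : 0 < s) :
    ((∃ x > 0, B * x * (Real.log (1 + E * γ / (B * σ2 * x)) / Real.log 2) = s)
      ↔ s * σ2 * Real.log 2 < E * γ)
    ∧ ∀ x y : ℝ, 0 < x → 0 < y →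
        B * x * (Real.log (1 + E * γ / (B * σ2 * x)) / Real.log 2) = s →
        B * y * (Real.log (1 + E * γ / (B * σ2 * y)) / Real.log 2) = s →
        x = y := by
  have hc : 0 < E * γ / (B * σ2) := by positivity
  simp only [mul_mul_log_div_log_eq_iff hB.ne' one_lt_two]
  refine ⟨?_, fun x y hx hy hxs hys ↦
    (strictMonoOn_mulLogOneAddDiv hc).injOn hx.le hy.le (hxs.trans hys.symm)⟩
  rw [exists_mulLogOneAddDiv_eq_iff hc (by positivity), div_lt_div_iff₀ hB (by positivity),
    show s * log 2 * (B * σ2) = s * σ2 * log 2 * B by ring, mul_lt_mul_iff_left₀ hB]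
end

section
/- Let K ∈ ℕ, let τ̃_k ≥ 0 and D_k > 0 for k ∈ {1,…,K}, let ρ ≥ 0 and λ* ≥ 0. Define a*_k = 1 if τ̃_k − λ*·D_k ≤ 0 and a*_k = 0 otherwise. Assume Σ_{k=1}^K (1 − a*_k)·D_k ≤ ρ and λ*·(Σ_{k=1}^K (1 − a*_k)·D_k − ρ) = 0. Then a* is optimal for the relaxed device-scheduling linear program: for every a ∈ ℝ^K with 0 ≤ a_k ≤ 1 for all k and Σ_{k=1}^K (1 − a_k)·D_k ≤ ρ, it holds that Σ_{k=1}^K a*_k·τ̃_k ≤ Σ_{k=1}^K a_k·τ̃_k. -/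
open Finset

/-! Weak Lagrangian duality. With multiplier `λ* ≥ 0`, the Lagrangian
`Σ a_k τ̃_k + λ* (Σ (1 - a_k) D_k - ρ)` equals `Σ a_k (τ̃_k - λ* D_k)` plus a constant, so over the
box `[0, 1]^K` it is minimised coordinatewise by the threshold rule `a*`. Complementary slackness
makes the Lagrangian of `a*` its objective, while for a feasible `a` the penalty term is `≤ 0`. -/

lemma ite_nonpos_mul_self_le_mul {c x : ℝ} (hx0 : 0 ≤ x) (hx1 : x ≤ 1) :
    (if c ≤ 0 then 1 else 0) * c ≤ x * c := by
  split_ifs with hc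
  · simpa using mul_le_mul_of_nonpos_right hx1 hc
  · simpa using mul_nonneg hx0 (le_of_not_ge hc)

lemma sum_ite_nonpos_mul_self_le_sum_mul {ι : Type*} [Fintype ι] (c x : ι → ℝ)
    (hx0 : ∀ k, 0 ≤ x k) (hx1 : ∀ k, x k ≤ 1) :
    ∑ k, (if c k ≤ 0 then 1 else 0) * c k ≤ ∑ k, x k * c k :=
  sum_le_sum fun k _ => ite_nonpos_mul_self_le_mul (hx0 k) (hx1 k)

lemma le_of_lagrangian_le {α : Type*} {f g : α → ℝ} {lam : ℝ} {x y : α} (hlam : 0 ≤ lam)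
    (hL : f x + lam * g x ≤ f y + lam * g y) (hcs : lam * g x = 0) (hy : g y ≤ 0) :
    f x ≤ f y := by
  nlinarith [mul_nonpos_of_nonneg_of_nonpos hlam hy]

lemma sum_mul_add_mul_sum_one_sub_mul {ι : Type*} [Fintype ι] (x τ D : ι → ℝ) (lam ρ : ℝ) :
    ∑ k, x k * τ k + lam * (∑ k, (1 - x k) * D k - ρ)
      = ∑ k, x k * (τ k - lam * D k) + lam * (∑ k, D k - ρ) := by
  simp only [mul_sub, sub_mul, one_mul, sum_sub_distrib, mul_sum]
  ring_nf

theorem device_scheduling_threshold_optimal_general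
    (K : ℕ) (τ D : Fin K → ℝ)
    (ρ lam : ℝ) (hlam : 0 ≤ lam)
    (astar : Fin K → ℝ)
    (hastar : ∀ k, astar k = if τ k - lam * D k ≤ 0 then 1 else 0)
    (hcs : lam * ((∑ k, (1 - astar k) * D k) - ρ) = 0)
    (a : Fin K → ℝ) (ha0 : ∀ k, 0 ≤ a k) (ha1 : ∀ k, a k ≤ 1)
    (hacon : ∑ k, (1 - a k) * D k ≤ ρ) :
    ∑ k, astar k * τ k ≤ ∑ k, a k * τ k := by
  obtain rfl : astar = fun k => if τ k - lam * D k ≤ 0 then 1 else 0 := funext hastar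
  refine le_of_lagrangian_le (f := fun x : Fin K → ℝ => ∑ k, x k * τ k)
    (g := fun x => ∑ k, (1 - x k) * D k - ρ) hlam ?_ hcs (sub_nonpos.mpr hacon)
  simp only [sum_mul_add_mul_sum_one_sub_mul _ τ D lam ρ, add_le_add_iff_right]
  exact sum_ite_nonpos_mul_self_le_sum_mul _ a ha0 ha1

/-- Proposition 3: the thresholding rule `a*_k = 1` iff `τ̃_k − λ*·D_k ≤ 0` is optimal for
the relaxed device-scheduling linear program, given primal feasibility and complementary
slackness at the dual variable `λ*`. -/
theorem device_scheduling_threshold_optimal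
    (K : ℕ) (τ D : Fin K → ℝ) (hτ : ∀ k, 0 ≤ τ k) (hD : ∀ k, 0 < D k)
    (ρ lam : ℝ) (hρ : 0 ≤ ρ) (hlam : 0 ≤ lam)
    (astar : Fin K → ℝ)
    (hastar : ∀ k, astar k = if τ k - lam * D k ≤ 0 then 1 else 0)
    (hfeas : ∑ k, (1 - astar k) * D k ≤ ρ)
    (hcs : lam * ((∑ k, (1 - astar k) * D k) - ρ) = 0)
    (a : Fin K → ℝ) (ha0 : ∀ k, 0 ≤ a k) (ha1 : ∀ k, a k ≤ 1)
    (hacon : ∑ k, (1 - a k) * D k ≤ ρ) :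
    ∑ k, astar k * τ k ≤ ∑ k, a k * τ k :=
  device_scheduling_threshold_optimal_general K τ D ρ lam hlam astar hastar hcs a ha0 ha1 hacon
end

section
/- Let B, σ², s, E > 0 and K ≥ 1, let g, h_{r,1}, …, h_{r,K} ∈ ℂ^N satisfy the power-homogeneous condition |(h_{r,k})_n| = |(h_{r,1})_n| for all k and n, and suppose the direct links are blocked (h_{d,k} = 0). Let γ* = (Σ_n |g_n|·|(h_{r,1})_n|)² and assume E·γ* > s·σ²·ln 2, so there is a unique τ₁ > 0 with B·τ₁·log₂(1 + E·γ*/(B·σ²·τ₁)) = s; set τ_T = K·τ₁. Suppose τ_N > 0, v ∈ ℂ^N with |v_n| = 1 for all n, and r ∈ ℝ^K satisfy: r_k ≥ 0 and τ_N·r_k ≥ s for all k, and for every subset J ⊆ {1,…,K}, Σ_{k∈J} r_k ≤ B·log₂(1 + Σ_{k∈J} (E/τ_N)·|Σ_n conj(g_n)·v_n·(h_{r,k})_n|²/(B·σ²)). Then τ_T ≤ τ_N. -/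
open Finset Real

/-!
Under a common phase vector every device's cascaded gain `|Σ_n conj(g_n) v_n (h_{r,k})_n|²` is
at most `γ*` (triangle inequality plus power homogeneity), so the NOMA sum-rate constraint on all
`K` devices is no better than `K` TDMA slots of length `τ_N / K` at gain `γ*`. The number of bits
`B t log₂(1 + c / t)` deliverable in time `t` is strictly increasing in `t` (secant slopes of the
strictly concave `log` decrease), hence `τ₁ ≤ τ_N / K`.
-/

theorem log_one_add_div_self_strictAntiOn :
    StrictAntiOn (fun u : ℝ => log (1 + u) / u) (Set.Ioi 0) := by
  intro u (hu : 0 < u) w (hw : 0 < w) huw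
  have h := strictConcaveOn_log_Ioi.secant_strict_mono (a := 1) (Set.mem_Ioi.2 one_pos)
    (show 0 < 1 + u by linarith) (show 0 < 1 + w by linarith) (by linarith) (by linarith)
    (by linarith)
  simpa only [log_one, sub_zero, add_sub_cancel_left] using h

theorem mul_log_one_add_div_strictMonoOn {c : ℝ} (hc : 0 < c) :
    StrictMonoOn (fun t : ℝ => t * log (1 + c / t)) (Set.Ioi 0) := by
  intro t (ht : 0 < t) t' (ht' : 0 < t') htt'
  have key : ∀ x : ℝ, 0 < x → x * log (1 + c / x) = c * (log (1 + c / x) / (c / x)) := by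
    intro x hx
    field_simp
  simp only [key t ht, key t' ht']
  refine mul_lt_mul_of_pos_left (log_one_add_div_self_strictAntiOn ?_ ?_ ?_) hc
  · exact div_pos hc ht'
  · exact div_pos hc ht
  · exact div_lt_div_of_pos_left hc ht htt'

/-- Bits delivered over bandwidth `B` in time `t` at SNR `c / t`: energy `E` spent over time `t`
at gain `γ` gives `c = E γ / (B σ²)`. -/
noncomputable def deliveredBits (B c t : ℝ) : ℝ := B * t * (log (1 + c / t) / log 2)

theorem deliveredBits_strictMonoOn {B c : ℝ} (hB : 0 < B) (hc : 0 < c) :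
    StrictMonoOn (deliveredBits B c) (Set.Ioi 0) := by
  intro t ht t' ht' htt'
  have h := mul_log_one_add_div_strictMonoOn hc ht ht' htt'
  have hB' : 0 < B / log 2 := div_pos hB (log_pos one_lt_two)
  have key : ∀ x, deliveredBits B c x = B / log 2 * (x * log (1 + c / x)) := fun x => by
    unfold deliveredBits; ring
  rw [key, key]
  exact mul_lt_mul_of_pos_left h hB'

theorem norm_sum_conj_mul_mul_le {ι : Type*} [Fintype ι] (g v h : ι → ℂ)
    (hv : ∀ n, ‖v n‖ ≤ 1) :
    ‖∑ n, starRingEnd ℂ (g n) * v n * h n‖ ≤ ∑ n, ‖g n‖ * ‖h n‖ := by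
  refine (norm_sum_le _ _).trans (sum_le_sum fun n _ => ?_)
  rw [norm_mul, norm_mul, Complex.norm_conj]
  gcongr
  exact mul_le_of_le_one_right (norm_nonneg _) (hv n)

theorem mul_sum_le_mul_deliveredBits {K : ℕ} {B σ2 E τ γ : ℝ} (hB : 0 < B) (hσ : 0 < σ2)
    (hE : 0 ≤ E) (hτ : 0 < τ) (hK : 0 < K) (x : Fin K → ℝ) (hx0 : ∀ k, 0 ≤ x k)
    (hx : ∀ k, x k ≤ γ) (r : Fin K → ℝ)
    (hcap : ∑ k, r k ≤ B * (log (1 + (∑ k, E / τ * x k) / (B * σ2)) / log 2)) :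
    τ * ∑ k, r k ≤ K * deliveredBits B (E * γ / (B * σ2)) (τ / K) := by
  have hsum : ∑ k, E / τ * x k ≤ K * (E / τ * γ) := by
    simpa using sum_le_sum fun k (_ : k ∈ univ) =>
      mul_le_mul_of_nonneg_left (hx k) (div_nonneg hE hτ.le)
  calc τ * ∑ k, r k
      ≤ τ * (B * (log (1 + K * (E / τ * γ) / (B * σ2)) / log 2)) := by
        refine mul_le_mul_of_nonneg_left (hcap.trans ?_) hτ.le
        have hlog2 := log_pos one_lt_two
        have hsum_nonneg : 0 ≤ ∑ k, E / τ * x k :=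
          sum_nonneg fun k _ => mul_nonneg (div_nonneg hE hτ.le) (hx0 k)
        gcongr
    _ = K * deliveredBits B (E * γ / (B * σ2)) (τ / K) := by
        unfold deliveredBits
        field_simp

theorem tdma_le_noma_power_homogeneous_general
    (B σ2 s E : ℝ) (hB : 0 < B) (hσ : 0 < σ2) (hs : 0 < s) (hE : 0 < E)
    (K N : ℕ) (hK : 0 < K)
    (g : Fin N → ℂ) (hr : Fin K → Fin N → ℂ)
    (hom : ∀ k n, ‖hr k n‖ = ‖hr ⟨0, hK⟩ n‖)
    (γstar : ℝ)
    (hγstar : γstar = (∑ n, ‖g n‖ * ‖hr ⟨0, hK⟩ n‖) ^ 2)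
    (hsolv : s * σ2 * Real.log 2 < E * γstar)
    (τ₁ : ℝ) (hτ₁pos : 0 < τ₁)
    (hτ₁ : B * τ₁ * (Real.log (1 + E * γstar / (B * σ2 * τ₁)) / Real.log 2) = s)
    -- feasible I-NOMA point with common phase vector `v` and rates `r`
    (τN : ℝ) (hτN : 0 < τN)
    (v : Fin N → ℂ) (hv : ∀ n, ‖v n‖ = 1)
    (r : Fin K → ℝ) (hrs : ∀ k, s ≤ τN * r k)
    (hcap : ∀ J : Finset (Fin K),
      ∑ k ∈ J, r k ≤ B *
        (Real.log (1 + (∑ k ∈ J, (E / τN) *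
            ‖∑ n, starRingEnd ℂ (g n) * v n * hr k n‖ ^ 2) / (B * σ2))
          / Real.log 2)) :
    (K : ℝ) * τ₁ ≤ τN := by
  have hK' : (0 : ℝ) < K := Nat.cast_pos.2 hK
  set c := E * γstar / (B * σ2) with hc
  have hcpos : 0 < c := div_pos (lt_of_le_of_lt (by positivity) hsolv) (mul_pos hB hσ)
  have hgain : ∀ k, ‖∑ n, starRingEnd ℂ (g n) * v n * hr k n‖ ^ 2 ≤ γstar := fun k => by
    rw [hγstar]
    gcongr
    simpa only [hom k] using norm_sum_conj_mul_mul_le g v (hr k) fun n => (hv n).le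
  have hnoma : K * s ≤ K * deliveredBits B c (τN / K) := calc
    K * s ≤ τN * ∑ k, r k := by
      simpa [mul_sum] using sum_le_sum fun k (_ : k ∈ univ) => hrs k
    _ ≤ K * deliveredBits B c (τN / K) :=
      mul_sum_le_mul_deliveredBits hB hσ hE.le hτN hK _ (fun k => by positivity) hgain r
        (hcap univ)
  have htdma : deliveredBits B c τ₁ = s := by rw [← hτ₁, deliveredBits, hc, div_div]
  have hτ : τ₁ ≤ τN / K :=
    ((deliveredBits_strictMonoOn hB hcpos).le_iff_le hτ₁pos (div_pos hτN hK')).1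
      (htdma ▸ le_of_mul_le_mul_left hnoma hK')
  rwa [le_div_iff₀' hK'] at hτ

/-- Theorem 3, first direction (power-homogeneous setting): with blocked direct links,
equal per-element cascaded channel magnitudes across devices, and equal communication
energies `E`, the I-TDMA uploading latency `τ_T = K·τ₁` (each device using its own optimal
IRS phase vector, with channel power gain `γ* = (Σ_n |g_n||(h_{r,1})_n|)²`) is at most any
feasible I-NOMA uploading latency `τ_N`. -/
theorem tdma_le_noma_power_homogeneous
    (B σ2 s E : ℝ) (hB : 0 < B) (hσ : 0 < σ2) (hs : 0 < s) (hE : 0 < E)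
    (K N : ℕ) (hK : 0 < K)
    (g : Fin N → ℂ) (hr : Fin K → Fin N → ℂ)
    (hom : ∀ k n, ‖hr k n‖ = ‖hr ⟨0, hK⟩ n‖)
    (γstar : ℝ)
    (hγstar : γstar = (∑ n, ‖g n‖ * ‖hr ⟨0, hK⟩ n‖) ^ 2)
    (hsolv : s * σ2 * Real.log 2 < E * γstar)
    (τ₁ : ℝ) (hτ₁pos : 0 < τ₁)
    (hτ₁ : B * τ₁ * (Real.log (1 + E * γstar / (B * σ2 * τ₁)) / Real.log 2) = s)
    -- feasible I-NOMA point with common phase vector `v` and rates `r`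
    (τN : ℝ) (hτN : 0 < τN)
    (v : Fin N → ℂ) (hv : ∀ n, ‖v n‖ = 1)
    (r : Fin K → ℝ) (hr0 : ∀ k, 0 ≤ r k) (hrs : ∀ k, s ≤ τN * r k)
    (hcap : ∀ J : Finset (Fin K),
      ∑ k ∈ J, r k ≤ B *
        (Real.log (1 + (∑ k ∈ J, (E / τN) *
            ‖∑ n, starRingEnd ℂ (g n) * v n * hr k n‖ ^ 2) / (B * σ2))
          / Real.log 2)) :
    (K : ℝ) * τ₁ ≤ τN :=
  tdma_le_noma_power_homogeneous_general B σ2 s E hB hσ hs hE K N hK g hr hom γstar hγstar hsolv τ₁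
    hτ₁pos hτ₁ τN hτN v hv r hrs hcap
end

section
/- Let B, σ², s > 0 and K ≥ 1, let g, h_{r,1}, …, h_{r,K} ∈ ℂ^N with blocked direct links (h_{d,k} = 0), and suppose the phase-homogeneous condition holds: for each n, the phases arg(conj(g_n)·(h_{r,k})_n) coincide for all k (whenever the products are nonzero). Let E_k > 0, set γ_k = (Σ_n |g_n|·|(h_{r,k})_n|)², assume E_k·γ_k > s·σ²·ln 2, let τ_k > 0 be the unique solution of B·τ_k·log₂(1 + E_k·γ_k/(B·σ²·τ_k)) = s, and set τ_T = Σ_k τ_k. Then: (i) there exists a common phase vector v ∈ ℂ^N with |v_n| = 1 for all n such that |Σ_n conj(g_n)·v_n·(h_{r,k})_n|² = γ_k for every k simultaneously; and (ii) for every subset J ⊆ {1,…,K}, |J|·s ≤ B·τ_T·log₂(1 + Σ_{k∈J} E_k·γ_k/(B·σ²·τ_T)). In particular, the rate vector r_k = s/τ_T satisfies all the I-NOMA capacity-region constraints at time τ_T, so the optimal I-NOMA uploading latency is at most the I-TDMA uploading latency τ_T. -/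
/-!
Rotating each IRS element by minus the phase that all devices share there makes every term
`conj(g_n) v_n (h_{r,k})_n` real and nonnegative for every `k` at once, so the triangle inequality
is tight for all devices simultaneously. For the rates, `t ↦ t log(1 + d/t)` is the perspective of
the concave function `log (1 + ·)`: by Jensen, pooling the I-TDMA times of the devices in `J`
carries at least the sum of their rates, and the perspective is nondecreasing in `t`, so the
pooled time may be enlarged to `τ_T`.
-/

open Finset

theorem sum_mul_log_one_add_div_le {ι : Type*} (J : Finset ι) {τ d : ι → ℝ}
    (hτ : ∀ k ∈ J, 0 < τ k) (hd : ∀ k ∈ J, 0 ≤ d k) :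
    ∑ k ∈ J, τ k * Real.log (1 + d k / τ k)
      ≤ (∑ k ∈ J, τ k) * Real.log (1 + (∑ k ∈ J, d k) / ∑ k ∈ J, τ k) := by
  rcases J.eq_empty_or_nonempty with rfl | hJ
  · simp
  set S := ∑ k ∈ J, τ k
  have hS : 0 < S := sum_pos hτ hJ
  have hweights : ∑ k ∈ J, τ k / S = 1 := by rw [← sum_div, div_self hS.ne']
  have hmean : ∑ k ∈ J, (τ k / S) • (1 + d k / τ k) = 1 + (∑ k ∈ J, d k) / S :=
    calc ∑ k ∈ J, (τ k / S) • (1 + d k / τ k) = ∑ k ∈ J, (τ k + d k) / S :=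
          sum_congr rfl fun k hk => by have := (hτ k hk).ne'; rw [smul_eq_mul]; field_simp
      _ = 1 + (∑ k ∈ J, d k) / S := by rw [← sum_div, sum_add_distrib, add_div, div_self hS.ne']
  have jensen := strictConcaveOn_log_Ioi.concaveOn.le_map_sum
    (fun k hk => div_nonneg (hτ k hk).le hS.le) hweights
    (fun k hk => show 0 < 1 + d k / τ k by have := hτ k hk; have := hd k hk; positivity)
  rw [hmean] at jensen
  calc ∑ k ∈ J, τ k * Real.log (1 + d k / τ k)
      = S * ∑ k ∈ J, (τ k / S) • Real.log (1 + d k / τ k) := by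
        rw [mul_sum]
        refine sum_congr rfl fun k _ => ?_
        rw [smul_eq_mul]; field_simp
    _ ≤ S * Real.log (1 + (∑ k ∈ J, d k) / S) := mul_le_mul_of_nonneg_left jensen hS.le

theorem mul_log_one_add_div_le_of_le {D S T : ℝ} (hD : 0 ≤ D) (hS : 0 ≤ S) (hST : S ≤ T) :
    S * Real.log (1 + D / S) ≤ T * Real.log (1 + D / T) := by
  rcases hS.eq_or_lt with rfl | hS
  · rw [zero_mul]
    exact mul_nonneg hST (Real.log_nonneg (le_add_of_nonneg_right (div_nonneg hD hST)))
  have hT := hS.trans_le hST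
  -- `1 + D/T` is the `S/T`-weighted mean of `1 + D/S` and `1`.
  have hconc := strictConcaveOn_log_Ioi.concaveOn.2 (x := 1 + D / S) (y := 1)
    (by simp only [Set.mem_Ioi]; positivity) (Set.mem_Ioi.2 one_pos) (div_nonneg hS.le hT.le)
    (sub_nonneg.2 ((div_le_one hT).2 hST)) (add_sub_cancel _ _)
  have hmix : S / T * (1 + D / S) + (1 - S / T) * 1 = 1 + D / T := by field_simp; ring
  simp only [smul_eq_mul, Real.log_one, mul_zero, add_zero, hmix] at hconc
  calc S * Real.log (1 + D / S) = T * (S / T * Real.log (1 + D / S)) := by field_simp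
    _ ≤ T * Real.log (1 + D / T) := mul_le_mul_of_nonneg_left hconc hT.le

theorem exists_common_arg {κ : Type*} (w : κ → ℂ)
    (harg : ∀ k l, w k ≠ 0 → w l ≠ 0 → (w k).arg = (w l).arg) :
    ∃ θ : ℝ, ∀ k, ‖w k‖ * Complex.exp (θ * Complex.I) = w k := by
  by_cases h : ∃ k, w k ≠ 0
  · obtain ⟨k₀, hk₀⟩ := h
    refine ⟨(w k₀).arg, fun k => ?_⟩
    by_cases hk : w k = 0
    · simp [hk]
    · rw [harg k₀ k hk₀ hk, Complex.norm_mul_exp_arg_mul_I]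
  · push Not at h
    exact ⟨0, fun k => by simp [h k]⟩

theorem exists_norm_eq_one_norm_sum_mul_eq_sum_norm {ι κ : Type*} [Fintype ι] (z : ι → κ → ℂ)
    (harg : ∀ n k l, z n k ≠ 0 → z n l ≠ 0 → (z n k).arg = (z n l).arg) :
    ∃ v : ι → ℂ, (∀ n, ‖v n‖ = 1) ∧ ∀ k, ‖∑ n, v n * z n k‖ = ∑ n, ‖z n k‖ := by
  choose θ hθ using fun n => exists_common_arg (z n) (harg n)
  refine ⟨fun n => Complex.exp (-θ n * Complex.I), fun n => ?_, fun k => ?_⟩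
  · exact_mod_cast Complex.norm_exp_ofReal_mul_I (-θ n)
  have hrot : ∀ n, Complex.exp (-θ n * Complex.I) * z n k = ‖z n k‖ := fun n => by
    conv_lhs => rw [← hθ n k]
    rw [mul_left_comm, ← Complex.exp_add, neg_mul, neg_add_cancel, Complex.exp_zero, mul_one]
  simp only [hrot]
  rw [← Complex.ofReal_sum, Complex.norm_real, Real.norm_of_nonneg (by positivity)]

theorem noma_le_tdma_phase_homogeneous_general
    (B σ2 s : ℝ) (hB : 0 < B) (hσ : 0 < σ2)
    (K N : ℕ)
    (g : Fin N → ℂ) (hr : Fin K → Fin N → ℂ)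
    (hom : ∀ n, ∀ k l : Fin K,
      starRingEnd ℂ (g n) * hr k n ≠ 0 → starRingEnd ℂ (g n) * hr l n ≠ 0 →
      Complex.arg (starRingEnd ℂ (g n) * hr k n)
        = Complex.arg (starRingEnd ℂ (g n) * hr l n))
    (E : Fin K → ℝ) (hE : ∀ k, 0 < E k)
    (γ : Fin K → ℝ)
    (hγ : ∀ k, γ k = (∑ n, ‖g n‖ * ‖hr k n‖) ^ 2)
    (τ : Fin K → ℝ) (hτpos : ∀ k, 0 < τ k)
    (hτeq : ∀ k,
      B * τ k * (Real.log (1 + E k * γ k / (B * σ2 * τ k)) / Real.log 2) = s) :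
    (∃ v : Fin N → ℂ, (∀ n, ‖v n‖ = 1) ∧
        ∀ k, ‖∑ n, starRingEnd ℂ (g n) * v n * hr k n‖ ^ 2 = γ k)
    ∧ (∀ J : Finset (Fin K),
        (J.card : ℝ) * s ≤ B * (∑ k, τ k) *
          (Real.log (1 + (∑ k ∈ J, E k * γ k) / (B * σ2 * (∑ k, τ k)))
            / Real.log 2)) := by
  refine ⟨?_, fun J => ?_⟩
  · obtain ⟨v, hv, hsum⟩ := exists_norm_eq_one_norm_sum_mul_eq_sum_norm
      (fun n k => starRingEnd ℂ (g n) * hr k n) hom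
    refine ⟨v, hv, fun k => ?_⟩
    have hcomm : ∀ n, starRingEnd ℂ (g n) * v n * hr k n = v n * (starRingEnd ℂ (g n) * hr k n) :=
      fun n => by ring
    simp only [hcomm, hsum, norm_mul, Complex.norm_conj, hγ]
  set d : Fin K → ℝ := fun k => E k * γ k / (B * σ2)
  have hd : ∀ k, 0 ≤ d k := fun k => by
    have := hE k; simp only [d, hγ]; positivity
  have hrate : ∀ k, s = B / Real.log 2 * (τ k * Real.log (1 + d k / τ k)) := fun k => by
    rw [← hτeq k, div_div]; ring
  calc (J.card : ℝ) * s = B / Real.log 2 * ∑ k ∈ J, τ k * Real.log (1 + d k / τ k) := by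
        rw [mul_sum, ← nsmul_eq_mul, ← sum_const]; exact sum_congr rfl fun k _ => hrate k
    _ ≤ B / Real.log 2 * ((∑ k ∈ J, τ k) * Real.log (1 + (∑ k ∈ J, d k) / ∑ k ∈ J, τ k)) := by
        gcongr
        exact sum_mul_log_one_add_div_le J (fun k _ => hτpos k) (fun k _ => hd k)
    _ ≤ B / Real.log 2 * ((∑ k, τ k) * Real.log (1 + (∑ k ∈ J, d k) / ∑ k, τ k)) := by
        gcongr B / Real.log 2 * ?_
        exact mul_log_one_add_div_le_of_le (sum_nonneg fun k _ => hd k)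
          (sum_nonneg fun k _ => (hτpos k).le)
          (sum_le_sum_of_subset_of_nonneg (subset_univ J) fun k _ _ => (hτpos k).le)
    _ = _ := by simp only [d]; rw [← sum_div, div_div]; ring

/-- Theorem 3, second direction (phase-homogeneous setting): with blocked direct links and
identical cascaded-channel phases across devices, (i) a single common unit-modulus IRS
phase vector simultaneously achieves every device's maximal channel power gain
`γ_k = (Σ_n |g_n||(h_{r,k})_n|)²`, and (ii) for every subset `J` of devices,
`|J|·s ≤ B·τ_T·log₂(1 + Σ_{k∈J} E_k γ_k/(B σ² τ_T))` where `τ_T = Σ_k τ_k` is the I-TDMA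
uploading latency; hence I-NOMA with time `τ_T` and rates `s/τ_T` is feasible. -/
theorem noma_le_tdma_phase_homogeneous
    (B σ2 s : ℝ) (hB : 0 < B) (hσ : 0 < σ2) (hs : 0 < s)
    (K N : ℕ) (hK : 0 < K)
    (g : Fin N → ℂ) (hr : Fin K → Fin N → ℂ)
    (hom : ∀ n, ∀ k l : Fin K,
      starRingEnd ℂ (g n) * hr k n ≠ 0 → starRingEnd ℂ (g n) * hr l n ≠ 0 →
      Complex.arg (starRingEnd ℂ (g n) * hr k n)
        = Complex.arg (starRingEnd ℂ (g n) * hr l n))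
    (E : Fin K → ℝ) (hE : ∀ k, 0 < E k)
    (γ : Fin K → ℝ)
    (hγ : ∀ k, γ k = (∑ n, ‖g n‖ * ‖hr k n‖) ^ 2)
    (hsolv : ∀ k, s * σ2 * Real.log 2 < E k * γ k)
    (τ : Fin K → ℝ) (hτpos : ∀ k, 0 < τ k)
    (hτeq : ∀ k,
      B * τ k * (Real.log (1 + E k * γ k / (B * σ2 * τ k)) / Real.log 2) = s) :
    (∃ v : Fin N → ℂ, (∀ n, ‖v n‖ = 1) ∧
        ∀ k, ‖∑ n, starRingEnd ℂ (g n) * v n * hr k n‖ ^ 2 = γ k)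
    ∧ (∀ J : Finset (Fin K),
        (J.card : ℝ) * s ≤ B * (∑ k, τ k) *
          (Real.log (1 + (∑ k ∈ J, E k * γ k) / (B * σ2 * (∑ k, τ k)))
            / Real.log 2)) :=
  noma_le_tdma_phase_homogeneous_general B σ2 s hB hσ K N g hr hom E hE γ hγ τ hτpos hτeq
end

section
/- Fix B, σ², s, ξ > 0 and for each k ∈ {1,…,K}: E^max_k > 0, C_k > 0, D_k > 0 and an effective channel power gain γ_k > 0. Suppose (a, τ, τ_loc, E^c, f) is feasible for the I-TDMA latency problem with fixed channel gains: a ∈ {0,1}^K; τ_k ≥ 0; τ_loc > 0; E^c_k ≥ 0; f_k ≥ 0; for every k: E^c_k + ξ·C_k·D_k·f_k² ≤ E^max_k, a_k·C_k·D_k ≤ τ_loc·f_k, and if a_k = 1 then τ_k > 0 and B·τ_k·log₂(1 + E^c_k·γ_k/(B·σ²·τ_k)) ≥ s. Then the point with CPU frequencies f'_k = a_k·C_k·D_k/τ_loc, the same a, τ, τ_loc, and communication energies E'^c_k = E^max_k − ξ·C_k·D_k·f'_k² ≥ E^c_k is also feasible and attains an objective value Σ_k τ_k + τ_loc no larger than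 the original; consequently, there exists an optimal solution in which f_k = a_k·C_k·D_k/τ_loc for every k. -/
/-!
Lowering a frequency to the deadline value `a_k C_k D_k / τ_loc` can only decrease the
computation energy `ξ C_k D_k f_k²`; handing the freed energy to communication can only
increase the number of bits deliverable in the same slot `τ_k`, since the Shannon rate
`B τ log₂(1 + E γ / (B σ² τ))` is monotone in the energy `E`.
-/

noncomputable def uploadBits (B σ2 γ τ E : ℝ) : ℝ :=
  B * τ * Real.logb 2 (1 + E * γ / (B * σ2 * τ))

lemma uploadBits_monotoneOn {B σ2 γ τ : ℝ} (hB : 0 ≤ B) (hσ : 0 ≤ σ2) (hγ : 0 ≤ γ)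
    (hτ : 0 ≤ τ) : MonotoneOn (uploadBits B σ2 γ τ) (Set.Ici 0) := by
  intro E (hE : 0 ≤ E) E' _ hEE'
  have harg : 0 < 1 + E * γ / (B * σ2 * τ) := by positivity
  unfold uploadBits
  gcongr
  norm_num

lemma le_sub_mul_sq_of_le {Ec Emax κ f f' : ℝ} (hκ : 0 ≤ κ) (hf' : 0 ≤ f') (hle : f' ≤ f)
    (henergy : Ec + κ * f ^ 2 ≤ Emax) : Ec ≤ Emax - κ * f' ^ 2 := by
  have : κ * f' ^ 2 ≤ κ * f ^ 2 := by gcongr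
  linarith

theorem tdma_optimal_cpu_frequency_general
    (B σ2 s ξ : ℝ) (hB : 0 < B) (hσ : 0 < σ2) (hξ : 0 < ξ)
    (K : ℕ) (Emax C D γ : Fin K → ℝ)
    (hC : ∀ k, 0 < C k) (hD : ∀ k, 0 < D k)
    (hγ : ∀ k, 0 < γ k)
    (a τ : Fin K → ℝ) (τloc : ℝ) (Ec f : Fin K → ℝ)
    (ha : ∀ k, a k = 0 ∨ a k = 1)
    (hτloc : 0 < τloc)
    (hEc : ∀ k, 0 ≤ Ec k)
    (henergy : ∀ k, Ec k + ξ * C k * D k * f k ^ 2 ≤ Emax k)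
    (hcomp : ∀ k, a k * C k * D k ≤ τloc * f k)
    (hrate : ∀ k, a k = 1 → 0 < τ k ∧
      s ≤ B * τ k * (Real.log (1 + Ec k * γ k / (B * σ2 * τ k)) / Real.log 2)) :
    -- the reset point: f' k = a k C k D k / τloc, E' k = Emax k − ξ C k D k f' k ²
    (∀ k, Ec k ≤ Emax k - ξ * C k * D k * (a k * C k * D k / τloc) ^ 2) ∧
    (∀ k, 0 ≤ a k * C k * D k / τloc) ∧
    (∀ k, 0 ≤ Emax k - ξ * C k * D k * (a k * C k * D k / τloc) ^ 2) ∧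
    (∀ k, (Emax k - ξ * C k * D k * (a k * C k * D k / τloc) ^ 2)
        + ξ * C k * D k * (a k * C k * D k / τloc) ^ 2 ≤ Emax k) ∧
    (∀ k, a k * C k * D k ≤ τloc * (a k * C k * D k / τloc)) ∧
    (∀ k, a k = 1 → 0 < τ k ∧
      s ≤ B * τ k *
        (Real.log (1 + (Emax k - ξ * C k * D k * (a k * C k * D k / τloc) ^ 2) * γ k
          / (B * σ2 * τ k)) / Real.log 2)) ∧
    ((∑ k, τ k) + τloc ≤ (∑ k, τ k) + τloc) := by
  have hf'_nonneg : ∀ k, 0 ≤ a k * C k * D k / τloc := fun k => by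
    have : 0 ≤ a k := by rcases ha k with h | h <;> simp [h]
    have := hC k
    have := hD k
    positivity
  have hf'_le : ∀ k, a k * C k * D k / τloc ≤ f k := fun k => (div_le_iff₀' hτloc).2 (hcomp k)
  have hEc_le : ∀ k, Ec k ≤ Emax k - ξ * C k * D k * (a k * C k * D k / τloc) ^ 2 :=
    fun k => le_sub_mul_sq_of_le (by have := hC k; have := hD k; positivity)
      (hf'_nonneg k) (hf'_le k) (henergy k)
  refine ⟨hEc_le, hf'_nonneg, fun k => (hEc k).trans (hEc_le k),
    fun k => (sub_add_cancel _ _).le, fun k => (mul_div_cancel₀ _ hτloc.ne').ge,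
    fun k hk => ?_, le_rfl⟩
  obtain ⟨hτk, hbits⟩ := hrate k hk
  -- `hbits` is about `uploadBits` by unfolding: `Real.logb 2 x = Real.log x / Real.log 2`
  exact ⟨hτk, hbits.trans <| uploadBits_monotoneOn hB.le hσ.le (hγ k).le hτk.le
    (hEc k) ((hEc k).trans (hEc_le k)) (hEc_le k)⟩

/-- Proposition 1: from any feasible point of the I-TDMA latency problem with fixed
channel gains, resetting the CPU frequencies to `f'_k = a_k·C_k·D_k/τ_loc` (so all
scheduled devices finish local computation exactly at the deadline `τ_loc`) and using the
freed energy for communication, `E'_k = E^max_k − ξ C_k D_k f'_k² ≥ E^c_k`, yields another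
feasible point with the same (hence no larger) objective `Σ_k τ_k + τ_loc`. -/
theorem tdma_optimal_cpu_frequency
    (B σ2 s ξ : ℝ) (hB : 0 < B) (hσ : 0 < σ2) (hs : 0 < s) (hξ : 0 < ξ)
    (K : ℕ) (Emax C D γ : Fin K → ℝ)
    (hEmax : ∀ k, 0 < Emax k) (hC : ∀ k, 0 < C k) (hD : ∀ k, 0 < D k)
    (hγ : ∀ k, 0 < γ k)
    (a τ : Fin K → ℝ) (τloc : ℝ) (Ec f : Fin K → ℝ)
    (ha : ∀ k, a k = 0 ∨ a k = 1)
    (hτ : ∀ k, 0 ≤ τ k) (hτloc : 0 < τloc)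
    (hEc : ∀ k, 0 ≤ Ec k) (hf : ∀ k, 0 ≤ f k)
    (henergy : ∀ k, Ec k + ξ * C k * D k * f k ^ 2 ≤ Emax k)
    (hcomp : ∀ k, a k * C k * D k ≤ τloc * f k)
    (hrate : ∀ k, a k = 1 → 0 < τ k ∧
      s ≤ B * τ k * (Real.log (1 + Ec k * γ k / (B * σ2 * τ k)) / Real.log 2)) :
    -- the reset point: f' k = a k C k D k / τloc, E' k = Emax k − ξ C k D k f' k ²
    (∀ k, Ec k ≤ Emax k - ξ * C k * D k * (a k * C k * D k / τloc) ^ 2) ∧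
    (∀ k, 0 ≤ a k * C k * D k / τloc) ∧
    (∀ k, 0 ≤ Emax k - ξ * C k * D k * (a k * C k * D k / τloc) ^ 2) ∧
    (∀ k, (Emax k - ξ * C k * D k * (a k * C k * D k / τloc) ^ 2)
        + ξ * C k * D k * (a k * C k * D k / τloc) ^ 2 ≤ Emax k) ∧
    (∀ k, a k * C k * D k ≤ τloc * (a k * C k * D k / τloc)) ∧
    (∀ k, a k = 1 → 0 < τ k ∧
      s ≤ B * τ k *
        (Real.log (1 + (Emax k - ξ * C k * D k * (a k * C k * D k / τloc) ^ 2) * γ k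
          / (B * σ2 * τ k)) / Real.log 2)) ∧
    ((∑ k, τ k) + τloc ≤ (∑ k, τ k) + τloc) :=
  tdma_optimal_cpu_frequency_general B σ2 s ξ hB hσ hξ K Emax C D γ hC hD hγ a τ τloc Ec f ha hτloc
    hEc henergy hcomp hrate
end
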